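/- arXiv:1207.1061 — 2 statements merged into one kernel-verified Lean document; each statement's English description precedes it below -/
import Mathlib

section
/- Let σ > 0, δ > 0, L > 0 with β := σ/(σ − L(exp(σδ) − 1)) well-defined and positive (i.e., L(exp(σδ)−1) < σ). Suppose nonnegative continuous functions e₁, …, e_p, z : [0, ∞) → [0, ∞) and constants C₁, …, C_p ≥ 0 satisfy for every i ∈ {1,…,p} and t ≥ 0: e_i(t) ≤ β·sup_{0 ≤ s ≤ t}(exp(−σ(t−s))·e_{i−1}(s)) + C_i·exp(−σt), with e₀ := z. Then for all t ≥ 0: e_p(t) ≤ β^p·sup_{0 ≤ s ≤ t}(exp(−σ(t−s))·z(s)) + exp(−σt)·∑_{k=1}^{p} β^{p−k}·C_k. -/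
open Real Set

noncomputable def supOn (f : ℝ → ℝ) (a b : ℝ) : ℝ := sSup (f '' Set.Icc a b)

lemma supOn_bdd (f : ℝ → ℝ) (hf : ContinuousOn f (Set.Ici 0)) (σ t : ℝ) :
    BddAbove ((fun s => Real.exp (-σ * (t - s)) * f s) '' Set.Icc 0 t) := by
  apply IsCompact.bddAbove_image isCompact_Icc
  exact ((Real.continuous_exp.comp (by continuity)).continuousOn).mul
    (hf.mono (fun x hx => hx.1))

theorem stmt7 (σ δ L : ℝ) (hσ : 0 < σ) (hδ : 0 < δ) (hL : 0 < L)
    (hsg : L * (Real.exp (σ * δ) - 1) < σ)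
    (β : ℝ) (hβ : β = σ / (σ - L * (Real.exp (σ * δ) - 1)))
    (p : ℕ) (hp : 1 ≤ p)
    (e : ℕ → ℝ → ℝ) (z : ℝ → ℝ) (C : ℕ → ℝ)
    (hCnn : ∀ i, 0 ≤ C i)
    (hcont : ∀ i, ContinuousOn (e i) (Set.Ici 0)) (hzc : ContinuousOn z (Set.Ici 0))
    (henn : ∀ i, ∀ t ≥ (0:ℝ), 0 ≤ e i t) (hznn : ∀ t ≥ (0:ℝ), 0 ≤ z t)
    (he0 : e 0 = z)
    (hstep : ∀ i, 1 ≤ i → i ≤ p → ∀ t ≥ (0:ℝ),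
      e i t ≤ β * supOn (fun s => Real.exp (-σ * (t - s)) * e (i - 1) s) 0 t
        + C i * Real.exp (-σ * t)) :
    ∀ t ≥ (0:ℝ),
      e p t ≤ β ^ p * supOn (fun s => Real.exp (-σ * (t - s)) * z s) 0 t
        + Real.exp (-σ * t) * ∑ k ∈ Finset.Icc 1 p, β ^ (p - k) * C k := by
  have hden : 0 < σ - L * (Real.exp (σ * δ) - 1) := by linarith
  have hβpos : 0 < β := hβ ▸ div_pos hσ hden
  -- notation: S f t
  set S : ℝ → ℝ → ℝ := fun t' => fun t =>
      supOn (fun s => Real.exp (-σ * (t - s)) * z s) 0 t with hS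
  -- element ≤ sup for z
  have hzel : ∀ t ≥ (0:ℝ), ∀ s ∈ Set.Icc (0:ℝ) t,
      Real.exp (-σ * (t - s)) * z s ≤ supOn (fun s => Real.exp (-σ * (t - s)) * z s) 0 t := by
    intro t ht s hs
    exact le_csSup (supOn_bdd z hzc σ t) ⟨s, hs, rfl⟩
  -- main induction
  have key : ∀ i, i ≤ p → ∀ t ≥ (0:ℝ),
      e i t ≤ β ^ i * supOn (fun s => Real.exp (-σ * (t - s)) * z s) 0 t
        + Real.exp (-σ * t) * ∑ k ∈ Finset.Icc 1 i, β ^ (i - k) * C k := by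
    intro i
    induction i with
    | zero =>
      intro _ t ht
      have h1 : z t = Real.exp (-σ * (t - t)) * z t := by simp
      have h2 := hzel t ht t ⟨ht, le_refl t⟩
      simp only [he0, pow_zero, one_mul]
      rw [show Finset.Icc 1 0 = ∅ from rfl]
      simp only [Finset.sum_empty, mul_zero, add_zero]
      linarith [h2, h1 ▸ h2]
    | succ i ih =>
      intro hip t ht
      have hiple : i ≤ p := Nat.le_of_succ_le hip
      have IH := ih hiple
      set D : ℝ := ∑ k ∈ Finset.Icc 1 i, β ^ (i - k) * C k with hD
      -- bound the inner sup
      have hsup : supOn (fun s => Real.exp (-σ * (t - s)) * e i s) 0 t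
          ≤ β ^ i * supOn (fun s => Real.exp (-σ * (t - s)) * z s) 0 t
            + Real.exp (-σ * t) * D := by
        unfold supOn
        apply csSup_le (Set.Nonempty.image _ ⟨0, Set.mem_Icc.mpr ⟨le_refl 0, ht⟩⟩)
        rintro x ⟨s, hs, rfl⟩
        have hs0 : (0:ℝ) ≤ s := hs.1
        have hst : s ≤ t := hs.2
        have hIHs := IH s hs0
        have hexp : (0:ℝ) < Real.exp (-σ * (t - s)) := Real.exp_pos _
        -- exp(-σ(t-s)) * S s ≤ S t
        have hSmove : Real.exp (-σ * (t - s)) *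
            supOn (fun τ => Real.exp (-σ * (s - τ)) * z τ) 0 s
            ≤ supOn (fun τ => Real.exp (-σ * (t - τ)) * z τ) 0 t := by
          rw [mul_comm, ← le_div_iff₀ hexp]
          unfold supOn
          apply csSup_le (Set.Nonempty.image _ ⟨0, Set.mem_Icc.mpr ⟨le_refl 0, hs0⟩⟩)
          rintro y ⟨τ, hτ, rfl⟩
          have hτt : τ ∈ Set.Icc (0:ℝ) t := ⟨hτ.1, hτ.2.trans hst⟩
          have h1 := hzel t ht τ hτt
          rw [le_div_iff₀ hexp]
          have : Real.exp (-σ * (s - τ)) * z τ * Real.exp (-σ * (t - s))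
              = Real.exp (-σ * (t - τ)) * z τ := by
            rw [mul_right_comm, ← Real.exp_add]; ring_nf
          rw [this]; exact h1
        calc Real.exp (-σ * (t - s)) * e i s
            ≤ Real.exp (-σ * (t - s)) *
              (β ^ i * supOn (fun τ => Real.exp (-σ * (s - τ)) * z τ) 0 s
                + Real.exp (-σ * s) * D) :=
              mul_le_mul_of_nonneg_left hIHs hexp.le
          _ = β ^ i * (Real.exp (-σ * (t - s)) *
                supOn (fun τ => Real.exp (-σ * (s - τ)) * z τ) 0 s)
              + (Real.exp (-σ * (t - s)) * Real.exp (-σ * s)) * D := by ring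
          _ ≤ β ^ i * supOn (fun τ => Real.exp (-σ * (t - τ)) * z τ) 0 t
              + Real.exp (-σ * t) * D := by
              have h2 : Real.exp (-σ * (t - s)) * Real.exp (-σ * s)
                  = Real.exp (-σ * t) := by rw [← Real.exp_add]; ring_nf
              rw [h2]
              gcongr
      have hstep' := hstep (i + 1) (Nat.le_add_left 1 i) hip t ht
      simp only [Nat.add_sub_cancel] at hstep'
      -- sum identity
      have hsum : ∑ k ∈ Finset.Icc 1 (i + 1), β ^ (i + 1 - k) * C k
          = β * D + C (i + 1) := by
        rw [hD, Finset.sum_Icc_succ_top (Nat.le_add_left 1 i), Finset.mul_sum]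
        simp only [Nat.sub_self, pow_zero, one_mul]
        congr 1
        apply Finset.sum_congr rfl
        intro k hk
        have hk' : k ≤ i := (Finset.mem_Icc.mp hk).2
        rw [show i + 1 - k = (i - k) + 1 by omega, pow_succ]
        ring
      calc e (i + 1) t
          ≤ β * supOn (fun s => Real.exp (-σ * (t - s)) * e i s) 0 t
            + C (i + 1) * Real.exp (-σ * t) := hstep'
        _ ≤ β * (β ^ i * supOn (fun s => Real.exp (-σ * (t - s)) * z s) 0 t
            + Real.exp (-σ * t) * D) + C (i + 1) * Real.exp (-σ * t) := by
            gcongr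
        _ = β ^ (i + 1) * supOn (fun s => Real.exp (-σ * (t - s)) * z s) 0 t
            + Real.exp (-σ * t) * (β * D + C (i + 1)) := by ring
        _ = _ := by rw [hsum]
  exact key p (le_refl p)
end

section
/- Let F ∈ ℝ^{n×n}, σ > 0, δ > 0 with |F|·(exp(σδ) − 1)/σ < 1 (in operator norm). Suppose x, ξ : [−δ, ∞) → ℝⁿ are continuous, and for all t ≥ 0: ξ(t) − x(t) = ∫_{t−δ}^{t} F(ξ(s) − x(s)) ds + w(t) + A·exp(−μt)·c, where w : [0,∞) → ℝⁿ is continuous, μ ≥ σ, A ∈ ℝ, c ∈ ℝⁿ. Then for all t ≥ 0: sup_{0 ≤ s ≤ t}(exp(σs)|ξ(s) − x(s)|) ≤ (σ/(σ − |F|(exp(σδ)−1)))·(sup_{0 ≤ s ≤ t}(exp(σs)|w(s)|) + |A||c| + sup_{−δ ≤ s ≤ 0}(exp(σs)|ξ(s) − x(s)|)). -/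
open Real Set

/-!
Put `e = ξ - x` and weight everything by `exp (σ s)`. Over a delay window of length `δ`, the
integral term multiplies the weighted size of `e` by at most `k = ‖F‖ (exp (σ δ) - 1) / σ`, and
the forcing term `A exp (-μ s) c` has weighted norm at most `|A| ‖c‖` because `μ ≥ σ`. Hence the
weighted sup `M` of `e` over `[0, t]` satisfies `M ≤ k (M₀ + M) + R`, where `M₀` is the weighted
sup over the initial interval `[-δ, 0]`; the small-gain condition `k < 1` lets one solve for `M`.
-/

lemma supOn_le {f : ℝ → ℝ} {a b C : ℝ} (hab : a ≤ b) (h : ∀ s ∈ Icc a b, f s ≤ C) :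
    supOn f a b ≤ C :=
  csSup_le ((nonempty_Icc.mpr hab).image f) (by rintro _ ⟨s, hs, rfl⟩; exact h s hs)

lemma le_supOn {f : ℝ → ℝ} {a b s : ℝ} (hf : ContinuousOn f (Icc a b)) (hs : s ∈ Icc a b) :
    f s ≤ supOn f a b :=
  le_csSup (isCompact_Icc.bddAbove_image hf) ⟨s, hs, rfl⟩

lemma supOn_nonneg {f : ℝ → ℝ} {a b : ℝ} (hf : ContinuousOn f (Icc a b)) (hf₀ : ∀ s, 0 ≤ f s)
    (hab : a ≤ b) : 0 ≤ supOn f a b :=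
  (hf₀ a).trans (le_supOn hf ⟨le_rfl, hab⟩)

lemma le_supOn_add_supOn {f : ℝ → ℝ} {a b c u : ℝ} (hf : ContinuousOn f (Icc a c))
    (hf₀ : ∀ s, 0 ≤ f s) (hab : a ≤ b) (hbc : b ≤ c) (hu : u ∈ Icc a c) :
    f u ≤ supOn f a b + supOn f b c := by
  have hab' := supOn_nonneg (hf.mono (Icc_subset_Icc_right hbc)) hf₀ hab
  have hbc' := supOn_nonneg (hf.mono (Icc_subset_Icc_left hab)) hf₀ hbc
  rcases le_total u b with hub | hbu
  · linarith [le_supOn (hf.mono (Icc_subset_Icc_right hbc)) ⟨hu.1, hub⟩]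
  · linarith [le_supOn (hf.mono (Icc_subset_Icc_left hab)) ⟨hbu, hu.2⟩]

lemma integral_exp_neg_mul {σ : ℝ} (hσ : σ ≠ 0) (a b : ℝ) :
    ∫ u in a..b, exp (-σ * u) = (exp (-σ * a) - exp (-σ * b)) / σ := by
  rw [intervalIntegral.integral_comp_mul_left exp (neg_ne_zero.mpr hσ), integral_exp,
    smul_eq_mul]
  field_simp
  ring

section

variable {E : Type*} [NormedAddCommGroup E] [NormedSpace ℝ E]

lemma exp_mul_norm_integral_le {f : ℝ → E} {σ δ s B : ℝ} (hσ : 0 < σ) (hδ : 0 ≤ δ)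
    (hf : ∀ u ∈ Icc (s - δ) s, ‖f u‖ ≤ B * exp (-σ * u)) :
    exp (σ * s) * ‖∫ u in (s - δ)..s, f u‖ ≤ (exp (σ * δ) - 1) * B / σ := by
  have hnorm : ‖∫ u in (s - δ)..s, f u‖ ≤ ∫ u in (s - δ)..s, B * exp (-σ * u) := by
    refine intervalIntegral.norm_integral_le_of_norm_le (by linarith) ?_
      (Continuous.intervalIntegrable (by fun_prop) _ _)
    exact Filter.Eventually.of_forall fun u hu => hf u (Ioc_subset_Icc_self hu)
  rw [intervalIntegral.integral_const_mul, integral_exp_neg_mul hσ.ne'] at hnorm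
  calc exp (σ * s) * ‖∫ u in (s - δ)..s, f u‖
      ≤ exp (σ * s) * (B * ((exp (-σ * (s - δ)) - exp (-σ * s)) / σ)) := by gcongr
    _ = B * (exp (σ * s + -σ * (s - δ)) - exp (σ * s + -σ * s)) / σ := by
      rw [exp_add, exp_add]; ring
    _ = (exp (σ * δ) - 1) * B / σ := by
      rw [show σ * s + -σ * (s - δ) = σ * δ by ring, show σ * s + -σ * s = 0 by ring, exp_zero]
      ring

lemma exp_mul_norm_smul_exp_neg_le {σ μ A s : ℝ} (hμ : σ ≤ μ) (hs : 0 ≤ s) (c : E) :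
    exp (σ * s) * ‖(A * exp (-μ * s)) • c‖ ≤ |A| * ‖c‖ := by
  have hdecay : exp (σ * s) * exp (-μ * s) ≤ 1 := by
    rw [← exp_add, exp_le_one_iff]
    nlinarith
  rw [norm_smul, norm_mul, norm_of_nonneg (exp_pos _).le, Real.norm_eq_abs]
  calc exp (σ * s) * (|A| * exp (-μ * s) * ‖c‖)
      = exp (σ * s) * exp (-μ * s) * (|A| * ‖c‖) := by ring
    _ ≤ |A| * ‖c‖ := mul_le_of_le_one_left (by positivity) hdecay

lemma exp_mul_norm_le_of_eq_integral {F : E →L[ℝ] E} {e w : ℝ → E} {c : E} {σ δ μ A s B : ℝ}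
    (hσ : 0 < σ) (hδ : 0 ≤ δ) (hμ : σ ≤ μ) (hs : 0 ≤ s)
    (heq : e s = (∫ u in (s - δ)..s, F (e u)) + w s + (A * exp (-μ * s)) • c)
    (hB : ∀ u ∈ Icc (s - δ) s, ‖e u‖ ≤ B * exp (-σ * u)) :
    exp (σ * s) * ‖e s‖ ≤ ‖F‖ * (exp (σ * δ) - 1) * B / σ + exp (σ * s) * ‖w s‖ + |A| * ‖c‖ := by
  have hFB : ∀ u ∈ Icc (s - δ) s, ‖F (e u)‖ ≤ ‖F‖ * B * exp (-σ * u) := fun u hu => by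
    rw [mul_assoc]; exact F.le_opNorm_of_le (hB u hu)
  rw [heq]
  calc exp (σ * s) * ‖(∫ u in (s - δ)..s, F (e u)) + w s + (A * exp (-μ * s)) • c‖
      ≤ exp (σ * s) * (‖∫ u in (s - δ)..s, F (e u)‖ + ‖w s‖ + ‖(A * exp (-μ * s)) • c‖) := by
        gcongr; exact norm_add₃_le
    _ = exp (σ * s) * ‖∫ u in (s - δ)..s, F (e u)‖ + exp (σ * s) * ‖w s‖
          + exp (σ * s) * ‖(A * exp (-μ * s)) • c‖ := by ring
    _ ≤ _ := by
      gcongr ?_ + _ + ?_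
      · exact (exp_mul_norm_integral_le hσ hδ hFB).trans_eq (by ring)
      · exact exp_mul_norm_smul_exp_neg_le hμ hs c

end

lemma small_gain_estimate {σ ρ M M₀ R : ℝ} (hσ : 0 < σ) (hρσ : ρ < σ)
    (hM₀ : 0 ≤ M₀) (h : M ≤ ρ * (M₀ + M) / σ + R) : M ≤ σ / (σ - ρ) * (R + M₀) := by
  have hgap : 0 < σ - ρ := sub_pos.mpr hρσ
  have hσM : σ * M ≤ ρ * (M₀ + M) + σ * R := by
    have := mul_le_mul_of_nonneg_left h hσ.le
    rwa [mul_add, mul_div_cancel₀ _ hσ.ne'] at this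
  rw [div_mul_eq_mul_div, le_div_iff₀ hgap]
  nlinarith [mul_le_mul_of_nonneg_right hρσ.le hM₀]

theorem stmt15 (n : ℕ) (σ δ μ A : ℝ) (hσ : 0 < σ) (hδ : 0 < δ) (hμ : σ ≤ μ)
    (F : EuclideanSpace ℝ (Fin n) →L[ℝ] EuclideanSpace ℝ (Fin n))
    (hsg : ‖F‖ * (Real.exp (σ * δ) - 1) / σ < 1)
    (x ξ w : ℝ → EuclideanSpace ℝ (Fin n)) (c : EuclideanSpace ℝ (Fin n))
    (hx : ContinuousOn x (Set.Ici (-δ))) (hξ : ContinuousOn ξ (Set.Ici (-δ)))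
    (hw : ContinuousOn w (Set.Ici 0))
    (heq : ∀ t ≥ (0:ℝ), ξ t - x t = (∫ s in (t - δ)..t, F (ξ s - x s))
      + w t + (A * Real.exp (-μ * t)) • c) :
    ∀ t ≥ (0:ℝ),
      supOn (fun s => Real.exp (σ * s) * ‖ξ s - x s‖) 0 t ≤
        (σ / (σ - ‖F‖ * (Real.exp (σ * δ) - 1))) *
          (supOn (fun s => Real.exp (σ * s) * ‖w s‖) 0 t + |A| * ‖c‖
            + supOn (fun s => Real.exp (σ * s) * ‖ξ s - x s‖) (-δ) 0) := by
  intro t ht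
  set g : ℝ → ℝ := fun s => exp (σ * s) * ‖ξ s - x s‖ with hg_def
  have hg : ContinuousOn g (Icc (-δ) t) :=
    (continuous_exp.comp (continuous_const_mul σ)).continuousOn.mul
      ((hξ.sub hx).norm.mono Icc_subset_Ici_self)
  have hg₀ : ∀ s, 0 ≤ g s := fun s => by positivity
  have hwt : ContinuousOn (fun s => exp (σ * s) * ‖w s‖) (Icc 0 t) :=
    (continuous_exp.comp (continuous_const_mul σ)).continuousOn.mul
      (hw.norm.mono Icc_subset_Ici_self)
  have hdecay : ∀ u ∈ Icc (-δ) t,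
      ‖ξ u - x u‖ ≤ (supOn g (-δ) 0 + supOn g 0 t) * exp (-σ * u) := by
    intro u hu
    have hgu := le_supOn_add_supOn hg hg₀ (by linarith) ht hu
    calc ‖ξ u - x u‖ = g u * exp (-σ * u) := by
          rw [hg_def, mul_right_comm, ← exp_add, neg_mul, add_neg_cancel, exp_zero, one_mul]
      _ ≤ _ := by gcongr
  have hpt : ∀ s ∈ Icc 0 t, g s ≤ ‖F‖ * (exp (σ * δ) - 1) * (supOn g (-δ) 0 + supOn g 0 t) / σ
      + (supOn (fun s => exp (σ * s) * ‖w s‖) 0 t + |A| * ‖c‖) := by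
    intro s hs
    have := exp_mul_norm_le_of_eq_integral hσ hδ.le hμ hs.1 (heq s hs.1)
      fun u hu => hdecay u ⟨by linarith [hu.1, hs.1], hu.2.trans hs.2⟩
    linarith [le_supOn hwt hs]
  exact small_gain_estimate hσ ((div_lt_one hσ).mp hsg)
    (supOn_nonneg (hg.mono (Icc_subset_Icc_right ht)) hg₀ (by linarith)) (supOn_le ht hpt)
end
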